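/- arXiv:2307.08680 — 2 statements merged into one kernel-verified Lean document; each statement's English description precedes it below -/
import Mathlib

section
/- For every n ≥ 2 and every 2 ≤ r ≤ n − 1, the capacity C_{n,r} of binary storage codes with parity repair on graphs with n vertices and locality at most r, i.e., the maximum over all simple graphs G on n vertices with no isolated vertices and maximum degree at most r of the rate 1 − rank_{𝔽₂}(Ā(G))/n, satisfies 1 − (1/n)·⌈n/(r+1)⌉ ≤ C_{n,r} ≤ 1 − (1/n)·⌊n/(r+1)⌋. -/
open Classical in
/-- The augmented adjacency matrix of a simple graph on `Fin n` over `𝔽₂ = ZMod 2`. -/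
noncomputable def augAdj {n : ℕ} (G : SimpleGraph (Fin n)) :
    Matrix (Fin n) (Fin n) (ZMod 2) :=
  fun u v => if u = v ∨ G.Adj u v then 1 else 0

open Classical in
/-- The set of rates of binary storage codes on simple graphs with `n` vertices,
no isolated vertices, and maximum degree (locality) at most `r`. -/
noncomputable def storageRates (n r : ℕ) : Set ℝ :=
  {q | ∃ G : SimpleGraph (Fin n),
       (∀ v, 0 < G.degree v) ∧ (∀ v, G.degree v ≤ r) ∧
       q = 1 - ((augAdj G).rank : ℝ) / n}

/-! Upper bound: every column of `Ā(G)` has at most `r + 1` nonzero entries, and a basis of the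
column space chosen among the columns must meet every row, since the diagonal of `Ā(G)` is `1`;
hence `n ≤ (r + 1) · rank Ā(G)`.

Lower bound: for `k = ⌈n / (r + 1)⌉` the residue classes mod `k` split `Fin n` into `k` classes of
sizes between `2` and `r + 1`. On the disjoint union of cliques on these classes,
`Ā(G)_{uv} = [f u = f v]` for the class map `f`, i.e. `Ā(G)` is the `k × k` identity matrix with
rows and columns reindexed along `f`, so its rank is at most `k`. -/

open Finset

theorem Submodule.exists_apply_ne_zero_of_mem_span_range {K ι κ : Type*} [Field K]
    {w : κ → ι → K} {x : ι → K} (hx : x ∈ Submodule.span K (Set.range w)) {i : ι}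
    (hxi : x i ≠ 0) : ∃ k, w k i ≠ 0 := by
  by_contra! h
  have hspan : Submodule.span K (Set.range w) ≤ LinearMap.ker (LinearMap.proj i) :=
    Submodule.span_le.2 (by rintro _ ⟨k, rfl⟩; exact h k)
  exact hxi (hspan hx)

theorem Matrix.card_le_mul_rank {K m n : Type*} [Field K] [DecidableEq K] [Fintype m]
    [Fintype n] (M : Matrix m n K) (d : ℕ) (hrow : ∀ i, ∃ j, M i j ≠ 0)
    (hcol : ∀ j, #{i | M i j ≠ 0} ≤ d) : Fintype.card m ≤ d * M.rank := by
  classical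
  obtain ⟨κ, a, ha, hspan, hli⟩ := exists_linearIndependent' K M.col
  have : Fintype κ := Fintype.ofInjective a ha
  have hrank : M.rank = Fintype.card κ := by
    rw [rank_eq_finrank_span_cols, ← hspan, finrank_span_eq_card hli]
  have hcover : (univ : Finset m) ⊆ univ.biUnion fun k => {i | M i (a k) ≠ 0} := by
    intro i _
    obtain ⟨j, hj⟩ := hrow i
    have hmem : M.col j ∈ Submodule.span K (Set.range (M.col ∘ a)) :=
      hspan ▸ Submodule.subset_span ⟨j, rfl⟩
    obtain ⟨k, hk⟩ := Submodule.exists_apply_ne_zero_of_mem_span_range hmem hj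
    exact mem_biUnion.2 ⟨k, mem_univ _, mem_filter.2 ⟨mem_univ _, hk⟩⟩
  calc Fintype.card m ≤ ∑ k, #{i | M i (a k) ≠ 0} := (card_le_card hcover).trans card_biUnion_le
    _ ≤ ∑ _k : κ, d := sum_le_sum fun k _ => hcol (a k)
    _ = d * M.rank := by rw [sum_const, card_univ, smul_eq_mul, hrank, mul_comm]

theorem augAdj_apply_self {n : ℕ} (G : SimpleGraph (Fin n)) (v : Fin n) : augAdj G v v = 1 := by
  simp [augAdj]

theorem card_filter_augAdj_ne_zero_le {n : ℕ} (G : SimpleGraph (Fin n)) (v : Fin n)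
    [Fintype (G.neighborSet v)] : #{u | augAdj G u v ≠ 0} ≤ G.degree v + 1 := by
  calc #{u | augAdj G u v ≠ 0} ≤ #(insert v (G.neighborFinset v)) := by
        refine card_le_card fun u hu => ?_
        simp only [mem_insert, SimpleGraph.mem_neighborFinset]
        by_contra! h
        exact (mem_filter.1 hu).2 (if_neg (by rintro (rfl | hadj) <;> simp_all [G.adj_comm]))
    _ ≤ G.degree v + 1 := by rw [← G.card_neighborFinset_eq_degree]; exact card_insert_le _ _

theorem le_mul_rank_augAdj {n r : ℕ} (G : SimpleGraph (Fin n)) [∀ v, Fintype (G.neighborSet v)]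
    (hdeg : ∀ v, G.degree v ≤ r) : n ≤ (r + 1) * (augAdj G).rank := by
  simpa using (augAdj G).card_le_mul_rank (r + 1) (fun i => ⟨i, by simp [augAdj_apply_self]⟩)
    fun v => (card_filter_augAdj_ne_zero_le G v).trans (by simpa using hdeg v)

def SimpleGraph.fiberCliques {V ι : Type*} (f : V → ι) : SimpleGraph V where
  Adj u v := u ≠ v ∧ f u = f v
  symm := ⟨fun _ _ h => ⟨h.1.symm, h.2.symm⟩⟩
  loopless := ⟨fun _ h => h.1 rfl⟩

theorem SimpleGraph.degree_fiberCliques {V ι : Type*} [Fintype V] [DecidableEq ι]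
    (f : V → ι) (v : V) [Fintype ((fiberCliques f).neighborSet v)] :
    (fiberCliques f).degree v = #{u | f u = f v} - 1 := by
  classical
  have : (fiberCliques f).neighborFinset v = ({u | f u = f v} : Finset V).erase v := by
    ext u
    rw [mem_neighborFinset]
    simp [fiberCliques, eq_comm, and_comm]
  rw [← card_neighborFinset_eq_degree, this, card_erase_of_mem (by simp)]

theorem augAdj_fiberCliques {n : ℕ} {ι : Type*} [DecidableEq ι] (f : Fin n → ι) :
    augAdj (SimpleGraph.fiberCliques f) = (1 : Matrix ι ι (ZMod 2)).submatrix f f := by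
  ext u v
  by_cases huv : u = v <;> simp [augAdj, SimpleGraph.fiberCliques, Matrix.one_apply, huv]

theorem rank_augAdj_fiberCliques_le {n : ℕ} {ι : Type*} [Fintype ι] (f : Fin n → ι) :
    (augAdj (SimpleGraph.fiberCliques f)).rank ≤ Fintype.card ι := by
  classical
  rw [augAdj_fiberCliques, ← Matrix.rank_one (R := ZMod 2)]
  exact Matrix.rank_submatrix_le _ _ _

theorem Fin.card_filter_val_mod_eq {n k : ℕ} (hk : 0 < k) (i : Fin k) :
    #{u : Fin n | (u : ℕ) % k = i} = n / k + if (i : ℕ) < n % k then 1 else 0 := by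
  rw [← Nat.mod_eq_of_lt i.2, ← Nat.count_modEq_card (b := n) hk i,
    Nat.count_eq_card_filter_range, ← card_map Fin.valEmbedding]
  congr 1
  refine Finset.ext fun x => ?_
  simp only [mem_map, mem_filter, mem_univ, true_and, Fin.valEmbedding_apply, mem_range]
  unfold Nat.ModEq
  exact ⟨fun ⟨a, h, ha⟩ => ha ▸ ⟨a.2, h⟩, fun ⟨hx, h⟩ => ⟨⟨x, hx⟩, h, rfl⟩⟩

open Classical in
theorem exists_graph_rank_augAdj_le {n r k : ℕ} (hk : 0 < k) (h2k : 2 * k ≤ n)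
    (hkn : n ≤ (r + 1) * k) :
    ∃ G : SimpleGraph (Fin n), (∀ v, 0 < G.degree v) ∧ (∀ v, G.degree v ≤ r) ∧
      (augAdj G).rank ≤ k := by
  let f : Fin n → Fin k := fun v => ⟨v % k, Nat.mod_lt _ hk⟩
  have hfiber (v : Fin n) : #{u | f u = f v} = n / k + if (f v : ℕ) < n % k then 1 else 0 := by
    simpa [f, Fin.ext_iff] using Fin.card_filter_val_mod_eq (n := n) hk (f v)
  have hlow : 2 ≤ n / k := (Nat.le_div_iff_mul_le hk).2 (by linarith)
  have hhigh (i : ℕ) : n / k + (if i < n % k then 1 else 0) ≤ r + 1 := by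
    split_ifs with h
    · have hne : n ≠ (r + 1) * k := fun h' => by simp [h'] at h
      have := (Nat.div_lt_iff_lt_mul hk).2 (lt_of_le_of_ne hkn hne)
      omega
    · simpa using Nat.div_le_of_le_mul (by linarith : n ≤ k * (r + 1))
  refine ⟨SimpleGraph.fiberCliques f, fun v => ?_, fun v => ?_, ?_⟩
  · rw [SimpleGraph.degree_fiberCliques, hfiber]
    omega
  · rw [SimpleGraph.degree_fiberCliques, hfiber]
    have := hhigh (f v)
    omega
  · simpa using rank_augAdj_fiberCliques_le f

theorem le_mul_add_div_succ (n r : ℕ) : n ≤ (r + 1) * ((n + r) / (r + 1)) := by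
  have := Nat.div_add_mod (n + r) (r + 1)
  have := Nat.mod_lt (n + r) (by omega : 0 < r + 1)
  omega

theorem two_mul_add_div_succ_le {n r : ℕ} (hn : 2 ≤ n) (hr : 2 ≤ r) :
    2 * ((n + r) / (r + 1)) ≤ n := by
  set q := (n + r) / (r + 1)
  have hq : q * (r + 1) ≤ n + r := Nat.div_mul_le_self _ _
  obtain hq_le | hq_ge : q ≤ 1 ∨ 2 ≤ q := by omega
  · omega
  · nlinarith [Nat.mul_le_mul hq_ge hr]

theorem storageRates_bddAbove (n r : ℕ) : BddAbove (storageRates n r) :=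
  ⟨1, by rintro _ ⟨G, -, -, rfl⟩; simp only [sub_le_self_iff]; positivity⟩

theorem capacity_bounds_general {n r : ℕ} (hn : 2 ≤ n) (hr : 2 ≤ r) :
    (1 : ℝ) - (((n + r) / (r + 1) : ℕ) : ℝ) / n ≤ sSup (storageRates n r) ∧
    sSup (storageRates n r) ≤ 1 - ((n / (r + 1) : ℕ) : ℝ) / n := by
  classical
  obtain ⟨G₀, hpos₀, hdeg₀, hrank₀⟩ := exists_graph_rank_augAdj_le
    (Nat.div_pos (by omega) (by omega)) (two_mul_add_div_succ_le hn hr) (le_mul_add_div_succ n r)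
  have hmem : 1 - ((augAdj G₀).rank : ℝ) / n ∈ storageRates n r := ⟨G₀, hpos₀, hdeg₀, rfl⟩
  constructor
  · refine le_trans ?_ (le_csSup (storageRates_bddAbove n r) hmem)
    gcongr
  · refine csSup_le ⟨_, hmem⟩ ?_
    rintro _ ⟨G, -, hdeg, rfl⟩
    have : n / (r + 1) ≤ (augAdj G).rank := Nat.div_le_of_le_mul (le_mul_rank_augAdj G hdeg)
    gcongr

/-- The capacity `C_{n,r}` of binary storage codes with parity repair on graphs with
`n` vertices and locality at most `r` satisfies
`1 - ⌈n/(r+1)⌉/n ≤ C_{n,r} ≤ 1 - ⌊n/(r+1)⌋/n`. -/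
theorem capacity_bounds {n r : ℕ} (hn : 2 ≤ n) (hr : 2 ≤ r) (hrn : r ≤ n - 1) :
    (1 : ℝ) - (((n + r) / (r + 1) : ℕ) : ℝ) / n ≤ sSup (storageRates n r) ∧
    sSup (storageRates n r) ≤ 1 - ((n / (r + 1) : ℕ) : ℝ) / n :=
  capacity_bounds_general hn hr
end

section
/- Let r : ℕ → ℕ be a sequence with 2 ≤ r(n) for all n. The following are equivalent: (i) r(n) → ∞ as n → ∞; (ii) there exists a sequence of simple graphs G_n, where G_n has n vertices, no isolated vertices, and maximum degree at most r(n), such that the rate 1 − rank_{𝔽₂}(Ā(G_n))/n of the binary storage code of G_n tends to 1 as n → ∞. -/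
/-!
If every vertex has degree at most `d`, every column of `Ā` has at most `d + 1` nonzero entries
while no row vanishes. A basis of the column space chosen among the columns must then cover all
`n` rows by the supports of its members, so `n ≤ rank Ā · (d + 1)`: a rate tending to `1` forces
`r n → ∞`. Conversely, cutting the vertices into consecutive cliques of sizes between `2` and
`r n + 1` gives `Ā = P Pᵀ` with `P` the incidence matrix of the roughly `n / r n` blocks.
-/

open Filter Finset Topology

theorem Matrix.card_le_rank_mul_of_card_support_col_le {m n K : Type*} [Fintype m] [Fintype n]
    [Field K] [DecidableEq K] (M : Matrix m n K) {c : ℕ} (hrow : ∀ i, ∃ j, M i j ≠ 0)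
    (hcol : ∀ j, #{i | M i j ≠ 0} ≤ c) :
    Fintype.card m ≤ M.rank * c := by
  classical
  obtain ⟨b, hb_sub, hb_span, hb_indep⟩ := exists_linearIndependent K (Set.range M.col)
  have : Fintype b := ((Set.finite_range M.col).subset hb_sub).fintype
  have hrank : M.rank = #b.toFinset := by
    rw [M.rank_eq_finrank_span_cols, ← hb_span, finrank_span_set_eq_card hb_indep]
  -- The column `j` with `M i j ≠ 0` lies in the span of `b`, and vectors vanishing at `i` span
  -- only such vectors.
  have hcover : (univ : Finset m) ⊆ b.toFinset.biUnion fun w => {i | w i ≠ 0} := by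
    intro i _
    obtain ⟨j, hj⟩ := hrow i
    by_contra hi
    have hle : Submodule.span K b ≤ LinearMap.ker (LinearMap.proj i) :=
      Submodule.span_le.2 fun w hw => by simp_all
    exact hj (hle (hb_span ▸ Submodule.subset_span (Set.mem_range_self j)))
  have hsupp : ∀ w ∈ b.toFinset, #{i | w i ≠ 0} ≤ c := by
    intro w hw
    obtain ⟨j, rfl⟩ := hb_sub (Set.mem_toFinset.1 hw)
    exact hcol j
  calc Fintype.card m = #univ := card_univ.symm
    _ ≤ ∑ w ∈ b.toFinset, #{i | w i ≠ 0} := (card_le_card hcover).trans card_biUnion_le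
    _ ≤ #b.toFinset * c := by simpa using sum_le_card_nsmul _ _ _ hsupp
    _ = M.rank * c := by rw [hrank]

section FiberGraph

variable {V ι : Type*}

def fiberGraph (f : V → ι) : SimpleGraph V where
  Adj u v := u ≠ v ∧ f u = f v
  symm := ⟨fun _ _ h => ⟨h.1.symm, h.2.symm⟩⟩
  loopless := ⟨fun _ h => h.1 rfl⟩

@[simp]
theorem fiberGraph_adj {f : V → ι} {u v : V} : (fiberGraph f).Adj u v ↔ u ≠ v ∧ f u = f v :=
  Iff.rfl

variable [Fintype V] [DecidableEq ι] (f : V → ι)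

theorem fiberGraph_degree (v : V) [Fintype ((fiberGraph f).neighborSet v)] :
    (fiberGraph f).degree v = #{u | f u = f v} - 1 := by
  classical
  have : (fiberGraph f).neighborFinset v = ({u | f u = f v} : Finset V).erase v := by
    ext u
    simp [eq_comm, and_comm]
  rw [← SimpleGraph.card_neighborFinset_eq_degree, this, card_erase_of_mem (by simp)]

theorem augAdj_fiberGraph {n : ℕ} (f : Fin n → ι) :
    augAdj (fiberGraph f) = Matrix.of fun u v => if f u = f v then 1 else 0 := by
  ext u v
  by_cases h : u = v <;> simp [augAdj, h]

theorem rank_augAdj_fiberGraph_le [Fintype ι] {n : ℕ} (f : Fin n → ι) :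
    (augAdj (fiberGraph f)).rank ≤ Fintype.card ι := by
  let P : Matrix (Fin n) ι (ZMod 2) := Matrix.of fun u k => if f u = k then 1 else 0
  have hP : augAdj (fiberGraph f) = P * P.transpose := by
    ext u v
    simp [augAdj_fiberGraph, P, Matrix.mul_apply, eq_comm]
  rw [hP]
  exact (Matrix.rank_mul_le_left _ _).trans P.rank_le_card_width

end FiberGraph

section BlockIndex

variable {n m : ℕ}

/-- Block `k < (n - 2) / m` of `Fin n` is `[k m, (k + 1) m)`; the last block, `k = (n - 2) / m`,
runs from `k m` to `n - 1`. For `2 ≤ m` and `2 ≤ n` every block then has between `2` and `m + 1`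
elements. -/
def blockIndex (n m : ℕ) (u : Fin n) : Fin ((n - 2) / m + 1) :=
  ⟨min (u / m) ((n - 2) / m), Nat.lt_succ_of_le (min_le_right _ _)⟩

theorem blockIndex_mul_le (u : Fin n) : (blockIndex n m u : ℕ) * m ≤ u :=
  (Nat.mul_le_mul_right m (min_le_left _ _)).trans (Nat.div_mul_le_self _ _)

theorem le_blockIndex_mul_add (hm : 0 < m) (u : Fin n) :
    (u : ℕ) ≤ blockIndex n m u * m + m := by
  have hu := Nat.lt_div_mul_add (a := u) hm
  have hn := Nat.lt_div_mul_add (a := n - 2) hm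
  have := u.isLt
  simp only [blockIndex]
  rcases min_cases ((u : ℕ) / m) ((n - 2) / m) with ⟨h, -⟩ | ⟨h, -⟩ <;> rw [h] <;> omega

theorem blockIndex_mul_add (hm : 0 < m) {k : Fin ((n - 2) / m + 1)} {j : ℕ} (hj : j < m)
    (h : k * m + j < n) : blockIndex n m ⟨k * m + j, h⟩ = k := by
  ext
  simp [blockIndex, mul_comm _ m, Nat.mul_add_div hm, Nat.div_eq_of_lt hj, Nat.le_of_lt_succ k.2]

theorem card_blockIndex_fiber_le (hm : 0 < m) (k : Fin ((n - 2) / m + 1)) :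
    #{u | blockIndex n m u = k} ≤ m + 1 := by
  calc #{u | blockIndex n m u = k} ≤ #(Icc (k * m) (k * m + m)) := by
        refine card_le_card_of_injOn Fin.val (fun u hu => ?_) Fin.val_injective.injOn
        obtain rfl : blockIndex n m u = k := (mem_filter.1 hu).2
        exact mem_Icc.2 ⟨blockIndex_mul_le u, le_blockIndex_mul_add hm u⟩
    _ = m + 1 := by rw [Nat.card_Icc]; omega

theorem two_le_card_blockIndex_fiber (hm : 2 ≤ m) (hn : 2 ≤ n) (k : Fin ((n - 2) / m + 1)) :
    2 ≤ #{u | blockIndex n m u = k} := by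
  have hk : (k : ℕ) * m + 1 < n := by
    have := Nat.mul_le_mul_right m (Nat.le_of_lt_succ k.2)
    have := Nat.div_mul_le_self (n - 2) m
    omega
  have hm0 : 0 < m := by omega
  refine one_lt_card.2 ⟨⟨k * m + 0, by omega⟩, ?_, ⟨k * m + 1, hk⟩, ?_, by simp⟩ <;>
    simp only [mem_filter, mem_univ, true_and]
  · exact blockIndex_mul_add hm0 hm0 _
  · exact blockIndex_mul_add hm0 hm _

end BlockIndex

section RankBounds

variable {n : ℕ}

theorem augAdj_ne_zero_iff {G : SimpleGraph (Fin n)} {u v : Fin n} :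
    augAdj G u v ≠ 0 ↔ u = v ∨ G.Adj u v := by
  unfold augAdj
  split_ifs with h <;> simp [h]

theorem le_rank_augAdj_mul {d : ℕ} (G : SimpleGraph (Fin n)) [∀ v, Fintype (G.neighborSet v)]
    (hdeg : ∀ v, G.degree v ≤ d) : n ≤ (augAdj G).rank * (d + 1) := by
  have hcol : ∀ v, #{u | augAdj G u v ≠ 0} ≤ d + 1 := fun v =>
    calc #{u | augAdj G u v ≠ 0} = #(insert v (G.neighborFinset v)) := by
          congr 1
          ext u
          simp [augAdj_ne_zero_iff, G.adj_comm]
      _ ≤ G.degree v + 1 := card_insert_le _ _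
      _ ≤ d + 1 := Nat.add_le_add_right (hdeg v) 1
  simpa using (augAdj G).card_le_rank_mul_of_card_support_col_le
    (fun u => ⟨u, augAdj_ne_zero_iff.2 (Or.inl rfl)⟩) hcol

theorem rank_augAdj_blockIndex_div_le {m : ℕ} (hn : 0 < n) :
    ((augAdj (fiberGraph (blockIndex n m))).rank : ℝ) / n ≤ 1 / m + 1 / n := by
  have hrank := rank_augAdj_fiberGraph_le (blockIndex n m)
  rw [Fintype.card_fin] at hrank
  have hblocks : (((n - 2) / m : ℕ) : ℝ) ≤ n / m :=
    Nat.cast_div_le.trans (by gcongr; exact_mod_cast Nat.sub_le n 2)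
  calc ((augAdj (fiberGraph (blockIndex n m))).rank : ℝ) / n
      ≤ ((((n - 2) / m : ℕ) : ℝ) + 1) / n := by gcongr; exact_mod_cast hrank
    _ ≤ (n / m + 1) / n := by gcongr
    _ = 1 / m + 1 / n := by
      rw [add_div, div_right_comm, div_self (Nat.cast_ne_zero.2 hn.ne')]

end RankBounds

theorem tendsto_atTop_of_tendsto_inv_add_one {α : Type*} {l : Filter α} {r : α → ℕ}
    (h : Tendsto (fun a => ((r a : ℝ) + 1)⁻¹) l (𝓝 0)) : Tendsto r l atTop := by
  have hpos : Tendsto (fun a => ((r a : ℝ) + 1)⁻¹) l (𝓝[>] 0) :=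
    tendsto_nhdsWithin_iff.2 ⟨h, Eventually.of_forall fun a => Set.mem_Ioi.2 (by positivity)⟩
  rw [← tendsto_natCast_atTop_iff (R := ℝ)]
  simpa using tendsto_atTop_add_const_right _ (-1) hpos.inv_tendsto_nhdsGT_zero

open Classical in
/-- Given a sequence of localities `r n ≥ 2`, there exists a sequence of graphs `G n` on
`n` vertices (for `n ≥ 2`, without isolated vertices and with maximum degree at most
`r n`) whose binary storage codes have rates tending to `1` if and only if
`r n → ∞`. -/
theorem rate_tendsto_one_iff_locality_tendsto_atTop (r : ℕ → ℕ) (hr : ∀ n, 2 ≤ r n) :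
    Filter.Tendsto r Filter.atTop Filter.atTop ↔
    ∃ G : (n : ℕ) → SimpleGraph (Fin n),
      (∀ n, 2 ≤ n → (∀ v, 0 < (G n).degree v) ∧ (∀ v, (G n).degree v ≤ r n)) ∧
      Filter.Tendsto (fun n => (1 : ℝ) - ((augAdj (G n)).rank : ℝ) / n)
        Filter.atTop (nhds 1) := by
  constructor
  · intro hr_top
    refine ⟨fun n => fiberGraph (blockIndex n (r n)), fun n hn => ⟨fun v => ?_, fun v => ?_⟩, ?_⟩
    · have := two_le_card_blockIndex_fiber (hr n) hn (blockIndex n (r n) v)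
      rw [fiberGraph_degree]
      omega
    · have := card_blockIndex_fiber_le (zero_lt_two.trans_le (hr n)) (blockIndex n (r n) v)
      rw [fiberGraph_degree]
      omega
    · have hbound : Tendsto (fun n => 1 / (r n : ℝ) + 1 / n) atTop (𝓝 0) := by
        simpa using ((tendsto_one_div_atTop_nhds_zero_nat (𝕜 := ℝ)).comp hr_top).add
          tendsto_one_div_atTop_nhds_zero_nat
      have hrank : Tendsto (fun n => ((augAdj (fiberGraph (blockIndex n (r n)))).rank : ℝ) / n)
          atTop (𝓝 0) := squeeze_zero' (Eventually.of_forall fun n => by positivity)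
        ((eventually_gt_atTop 0).mono fun n hn => rank_augAdj_blockIndex_div_le hn) hbound
      simpa using hrank.const_sub 1
  · rintro ⟨G, hG, hrate⟩
    have hrank : Tendsto (fun n => ((augAdj (G n)).rank : ℝ) / n) atTop (𝓝 0) := by
      simpa using hrate.const_sub 1
    refine tendsto_atTop_of_tendsto_inv_add_one (squeeze_zero'
      (Eventually.of_forall fun n => by positivity) ?_ hrank)
    filter_upwards [eventually_ge_atTop 2] with n hn
    have hle : (n : ℝ) ≤ (augAdj (G n)).rank * (r n + 1) := by
      exact_mod_cast le_rank_augAdj_mul (G n) (hG n hn).2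
    rw [inv_eq_one_div, div_le_div_iff₀ (by positivity) (by positivity)]
    linarith
end
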